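/- Assume m ≤ k. For every integer u with (k+1)/2 ≤ u ≤ m, the number of crossing circuits D ⊆ Ω with |D| = u is at most binom(m, u) · (q+1)^{2u−k−1}. -/

import Mathlib

/-!
A crossing circuit `D` of size `u` has one point on each of `u` lines, indexed by some `S`.
Writing each term `c_x x` of its dependence relation as `a_i P_i + b_i Q_i` on its line turns
the relation into a nonzero vector of the kernel of `(a, b) ↦ ∑_{i ∈ S} (a_i P_i + b_i Q_i)`,
and `D` is recovered from the projective class of that vector as the set of points spanned by
its line components. General position makes this map `F^{2u} → F^k` surjective, so its kernel has
dimension `2u - k` and contains `∑_{i < 2u-k} q^i ≤ (q+1)^{2u-k-1}` projective points.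
Summing over the `binom(m, u)` choices of `S` gives the bound.
-/

open scoped Classical
noncomputable section

variable {F : Type} [Field F]

/-- Projective points of `F^k`. -/
abbrev Pt (F : Type) [Field F] (k : ℕ) := Projectivization F (Fin k → F)

/-- Linear span of a set of projective points. -/
def pspan {k : ℕ} (T : Set (Pt F k)) : Submodule F (Fin k → F) :=
  ⨆ x ∈ T, x.submodule

/-- A finite set of projective points is dependent if the dimension of its linear span is
at most its cardinality minus one. -/
def Dep {k : ℕ} (T : Finset (Pt F k)) : Prop :=
  Module.finrank F (pspan (T : Set (Pt F k))) + 1 ≤ T.card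

/-- A circuit is a dependent set that is minimal with respect to inclusion. -/
def IsCircuit {k : ℕ} (T : Finset (Pt F k)) : Prop :=
  Dep T ∧ ∀ T' ⊂ T, ¬ Dep T'

/-- A crossing circuit (for the line configuration `L`): a circuit contained in the union
of the lines which contains at most one point on each line. -/
def CrossingCircuit {k m : ℕ} (L : Fin m → Submodule F (Fin k → F))
    (T : Finset (Pt F k)) : Prop :=
  IsCircuit T ∧ (∀ x ∈ T, ∃ i, x.submodule ≤ L i) ∧
    ∀ i, (T.filter fun x => x.submodule ≤ L i).card ≤ 1


open Finset Submodule Projectivization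
open scoped LinearAlgebra.Projectivization

section Circuits

variable {k : ℕ}

lemma pspan_eq_span_image_rep (T : Set (Pt F k)) :
    pspan T = span F (Projectivization.rep '' T) := by
  simp [pspan, Set.image_eq_iUnion, span_iUnion₂, submodule_eq]

lemma dep_iff_not_linearIndepOn (T : Finset (Pt F k)) :
    Dep T ↔ ¬ LinearIndepOn F Projectivization.rep (T : Set (Pt F k)) := by
  have hle := finrank_range_le_card (R := F) fun x : (T : Set (Pt F k)) => x.1.rep
  rw [Dep, LinearIndepOn, linearIndependent_iff_card_eq_finrank_span]
  rw [Set.finrank, ← Set.image_eq_range, ← pspan_eq_span_image_rep] at hle ⊢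
  simp only [Finset.coe_sort_coe, Fintype.card_coe] at hle ⊢
  omega

lemma IsCircuit.exists_sum_smul_rep_eq_zero {T : Finset (Pt F k)} (hT : IsCircuit T) :
    ∃ c : Pt F k → F, ∑ x ∈ T, c x • x.rep = 0 ∧ ∀ x ∈ T, c x ≠ 0 := by
  obtain ⟨c, hsum, x₁, hx₁, hc₁⟩ :=
    not_linearIndepOn_finset_iff.1 ((dep_iff_not_linearIndepOn T).1 hT.1)
  refine ⟨c, hsum, fun x₀ hx₀ hc₀ => hT.2 _ (erase_ssubset hx₀) ?_⟩
  rw [dep_iff_not_linearIndepOn, not_linearIndepOn_finset_iff]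
  refine ⟨c, by rwa [sum_erase _ (by simp [hc₀])], x₁, mem_erase.2 ⟨?_, hx₁⟩, hc₁⟩
  rintro rfl
  exact hc₁ hc₀

end Circuits

lemma geom_sum_range_succ_le_add_one_pow (q d : ℕ) :
    ∑ i ∈ range (d + 1), q ^ i ≤ (q + 1) ^ d := by
  rw [add_pow]
  refine sum_le_sum fun i hi => ?_
  rw [one_pow, mul_one]
  exact Nat.le_mul_of_pos_right _ (Nat.choose_pos (Nat.lt_succ_iff.1 (mem_range.1 hi)))

lemma finrank_ker_linearCombination {ι W : Type*} [Fintype ι] [AddCommGroup W] [Module F W]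
    [FiniteDimensional F W] {v : ι → W} {s : Finset ι} (hs : LinearIndepOn F v s)
    (hcard : s.card = Module.finrank F W) :
    Module.finrank F (LinearMap.ker (Fintype.linearCombination F v)) =
      Fintype.card ι - Module.finrank F W := by
  have hrange : LinearMap.range (Fintype.linearCombination F v) = ⊤ := by
    rw [Fintype.range_linearCombination, eq_top_iff,
      ← LinearIndependent.span_eq_top_of_card_eq_finrank' hs (by simpa using hcard)]
    exact span_mono (Set.range_comp_subset_range _ _)
  have := LinearMap.finrank_range_add_finrank_ker (Fintype.linearCombination F v)
  rw [hrange, finrank_top, Module.finrank_fintype_fun_eq_card] at this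
  omega

section LineConfiguration

variable {k m : ℕ} (P Q : Fin m → Fin k → F) (S : Finset (Fin m))

def lineComponent (w : S ⊕ S → F) (i : S) : Fin k → F :=
  w (.inl i) • P i + w (.inr i) • Q i

def pairCombination : (S ⊕ S → F) →ₗ[F] (Fin k → F) :=
  Fintype.linearCombination F (Sum.elim P Q ∘ Sum.map Subtype.val Subtype.val)

def componentSpans (w : S ⊕ S → F) : Finset (Submodule F (Fin k → F)) :=
  univ.image fun i => span F {lineComponent P Q S w i}

def crossingCircuitsOn (L : Fin m → Submodule F (Fin k → F)) : Set (Finset (Pt F k)) :=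
  {D | CrossingCircuit L D ∧ D.card = S.card ∧ ∀ x ∈ D, ∃ i ∈ S, x.submodule ≤ L i}

variable {P Q S}

lemma pairCombination_apply (w : S ⊕ S → F) :
    pairCombination P Q S w = ∑ i, lineComponent P Q S w i := by
  simp [pairCombination, lineComponent, Fintype.linearCombination_apply, Fintype.sum_sum_type,
    sum_add_distrib]

lemma finrank_ker_pairCombination
    (hgen : ∀ T : Finset (Fin m ⊕ Fin m), T.card ≤ k →
      LinearIndependent F (fun t : {x // x ∈ T} => Sum.elim P Q (t : Fin m ⊕ Fin m)))
    (hk : k ≤ 2 * S.card) :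
    Module.finrank F (LinearMap.ker (pairCombination P Q S)) = 2 * S.card - k := by
  have hinj :
      Function.Injective (Sum.map (Subtype.val : S → Fin m) (Subtype.val : S → Fin m)) :=
    Subtype.val_injective.sumMap Subtype.val_injective
  obtain ⟨s, -, hs⟩ :=
    exists_subset_card_eq (s := (univ : Finset (S ⊕ S))) (n := k) (by simpa [two_mul] using hk)
  have hli :
      LinearIndepOn F (Sum.elim P Q ∘ Sum.map Subtype.val Subtype.val) (s : Set (S ⊕ S)) := by
    refine LinearIndepOn.comp_of_image ?_ hinj.injOn
    rw [← coe_image]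
    exact hgen _ (hs ▸ card_image_le)
  rw [pairCombination, finrank_ker_linearCombination hli (by simp [hs])]
  simp [two_mul]

end LineConfiguration

section Representation

variable {k m : ℕ} {P Q : Fin m → Fin k → F} {S : Finset (Fin m)}

lemma componentSpans_smul {t : F} (ht : t ≠ 0) (w : S ⊕ S → F) :
    componentSpans P Q S (t • w) = componentSpans P Q S w := by
  have hcomp : ∀ i, lineComponent P Q S (t • w) i = t • lineComponent P Q S w i := fun i => by
    simp [lineComponent, smul_add, smul_smul]
  simp only [componentSpans, hcomp, span_singleton_smul_eq (IsUnit.mk0 t ht)]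

lemma eq_of_image_submodule_subset_componentSpans {w : S ⊕ S → F} {D D' : Finset (Pt F k)}
    (hD : D.card = S.card) (hD' : D'.card = S.card)
    (h : D.image Projectivization.submodule ⊆ componentSpans P Q S w)
    (h' : D'.image Projectivization.submodule ⊆ componentSpans P Q S w) : D = D' := by
  have hcard : (componentSpans P Q S w).card ≤ S.card := card_image_le.trans (by simp)
  have key : ∀ E : Finset (Pt F k), E.card = S.card →
      E.image Projectivization.submodule ⊆ componentSpans P Q S w →
      E.image Projectivization.submodule = componentSpans P Q S w := fun E hE hsub =>
    eq_of_subset_of_card_le hsub (by rw [card_image_of_injective _ submodule_injective]; omega)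
  exact image_injective submodule_injective ((key D hD h).trans (key D' hD' h').symm)

lemma ne_zero_of_image_submodule_subset_componentSpans {w : S ⊕ S → F} {D : Finset (Pt F k)}
    (hD : D.Nonempty) (h : D.image Projectivization.submodule ⊆ componentSpans P Q S w) :
    w ≠ 0 := by
  rintro rfl
  obtain ⟨x, hx⟩ := hD
  obtain ⟨i, -, hi⟩ := mem_image.1 (h (mem_image_of_mem _ hx))
  rw [show lineComponent P Q S 0 i = 0 by simp [lineComponent], span_zero_singleton,
    submodule_eq, eq_comm, span_singleton_eq_bot] at hi
  exact x.rep_nonzero hi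

lemma exists_mem_ker_image_submodule_subset_componentSpans
    {L : Fin m → Submodule F (Fin k → F)} (hL : ∀ i, L i = span F {P i, Q i})
    {D : Finset (Pt F k)} (hD : D ∈ crossingCircuitsOn S L) :
    ∃ w, pairCombination P Q S w = 0 ∧
      D.image Projectivization.submodule ⊆ componentSpans P Q S w := by
  obtain ⟨⟨hcirc, -, hcross⟩, hcard, hlines⟩ := hD
  obtain ⟨c, hsum, hc⟩ := hcirc.exists_sum_smul_rep_eq_zero
  have hψ : ∀ x : D, ∃ i : S, x.1.submodule ≤ L i := fun x =>
    let ⟨i, hi, hx⟩ := hlines x.1 x.2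
    ⟨⟨i, hi⟩, hx⟩
  choose ψ hψ using hψ
  have hψinj : Function.Injective ψ := fun x y hxy => Subtype.ext <|
    card_le_one.1 (hcross (ψ x)) _ (mem_filter.2 ⟨x.2, hψ x⟩) _
      (mem_filter.2 ⟨y.2, hxy ▸ hψ y⟩)
  let e : D ≃ S := Equiv.ofBijective ψ
    ((Fintype.bijective_iff_injective_and_card ψ).2 ⟨hψinj, by simp [hcard]⟩)
  have hmem : ∀ i : S, (e.symm i).1.rep ∈ span F {P i, Q i} := fun i => by
    have hle : (e.symm i).1.submodule ≤ L i := by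
      simpa only [show ψ (e.symm i) = i from e.apply_symm_apply i] using hψ (e.symm i)
    exact hL i ▸ hle (submodule_eq (e.symm i).1 ▸ mem_span_singleton_self _)
  choose a b hab using fun i => mem_span_pair.1 (hmem i)
  set w : S ⊕ S → F := Sum.elim (fun i => c (e.symm i) * a i) (fun i => c (e.symm i) * b i)
  have hcomp : ∀ i, lineComponent P Q S w i = c (e.symm i) • (e.symm i).1.rep := fun i => by
    simp [w, lineComponent, mul_smul, ← smul_add, hab]
  refine ⟨w, ?_, ?_⟩
  · rw [pairCombination_apply]
    simp_rw [hcomp]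
    rw [e.symm.sum_comp (fun x : D => c x • x.1.rep), sum_coe_sort D (fun x => c x • x.rep)]
    exact hsum
  · rintro _ hy
    obtain ⟨x, hx, rfl⟩ := mem_image.1 hy
    refine mem_image.2 ⟨e ⟨x, hx⟩, mem_univ _, ?_⟩
    rw [hcomp, e.symm_apply_apply, span_singleton_smul_eq (IsUnit.mk0 _ (hc x hx)),
      submodule_eq]

lemma ncard_crossingCircuitsOn_le [Finite F] {L : Fin m → Submodule F (Fin k → F)}
    (hL : ∀ i, L i = span F {P i, Q i}) (hS : S.Nonempty) :
    (crossingCircuitsOn S L).ncard ≤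
      Nat.card (ℙ F (LinearMap.ker (pairCombination P Q S))) := by
  have hker : ∀ D : crossingCircuitsOn S L, ∃ w : LinearMap.ker (pairCombination P Q S),
      w ≠ 0 ∧ D.1.image Projectivization.submodule ⊆ componentSpans P Q S w := by
    rintro ⟨D, hD⟩
    obtain ⟨w, hw, hsub⟩ := exists_mem_ker_image_submodule_subset_componentSpans hL hD
    have hne : D.Nonempty := by rw [← card_pos, hD.2.1]; exact hS.card_pos
    exact ⟨⟨w, hw⟩, fun h => ne_zero_of_image_submodule_subset_componentSpans hne hsub
      (congrArg Subtype.val h), hsub⟩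
  choose w hw0 hw using hker
  rw [← Nat.card_coe_set_eq]
  refine Nat.card_le_card_of_injective (fun D => mk F (w D) (hw0 D)) fun D D' h => ?_
  obtain ⟨t, ht⟩ := (mk_eq_mk_iff F _ _ _ _).1 h
  have hspans : componentSpans P Q S (w D) = componentSpans P Q S (w D') := by
    rw [← ht]
    exact componentSpans_smul t.ne_zero _
  exact Subtype.ext (eq_of_image_submodule_subset_componentSpans D.2.2.1 D'.2.2.1 (hw D)
    (hspans ▸ hw D'))

lemma exists_mem_crossingCircuitsOn {L : Fin m → Submodule F (Fin k → F)} {D : Finset (Pt F k)}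
    (hD : CrossingCircuit L D) :
    ∃ S : Finset (Fin m), S.card = D.card ∧ D ∈ crossingCircuitsOn S L := by
  choose ψ hψ using hD.2.1
  have hψinj : Function.Injective fun x : D => ψ x.1 x.2 := fun x y hxy => Subtype.ext <|
    card_le_one.1 (hD.2.2 (ψ x.1 x.2)) _ (mem_filter.2 ⟨x.2, hψ _ x.2⟩) _
      (mem_filter.2 ⟨y.2, by rw [show ψ x.1 x.2 = ψ y.1 y.2 from hxy]; exact hψ _ y.2⟩)
  have hcard : #(D.attach.image fun x => ψ x.1 x.2) = #D := by
    rw [card_image_of_injective _ hψinj, card_attach]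
  refine ⟨D.attach.image fun x => ψ x.1 x.2, hcard, hD, hcard.symm,
    fun x hx => ⟨ψ x hx, ?_, hψ x hx⟩⟩
  exact mem_image.2 ⟨⟨x, hx⟩, mem_attach _ _, rfl⟩

end Representation

theorem statement12_general [Fintype F] {m k : ℕ}
    (P Q : Fin m → (Fin k → F))
    (hgen : ∀ T : Finset (Fin m ⊕ Fin m), T.card ≤ k →
      LinearIndependent F (fun t : {x // x ∈ T} => Sum.elim P Q (t : Fin m ⊕ Fin m)))
    (L : Fin m → Submodule F (Fin k → F))
    (hL : ∀ i, L i = Submodule.span F {P i, Q i})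
    (u : ℕ) (hu1 : k + 1 ≤ 2 * u) (hu2 : u ≤ m) :
    {D : Finset (Pt F k) | CrossingCircuit L D ∧ D.card = u}.ncard
      ≤ m.choose u * (Fintype.card F + 1) ^ (2 * u - k - 1) := by
  have hcover : {D : Finset (Pt F k) | CrossingCircuit L D ∧ D.card = u} ⊆
      ⋃ S ∈ powersetCard u univ, crossingCircuitsOn S L := by
    rintro D ⟨hD, rfl⟩
    obtain ⟨S, hS, hDS⟩ := exists_mem_crossingCircuitsOn hD
    exact Set.mem_biUnion (mem_powersetCard.2 ⟨subset_univ S, hS⟩) hDS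
  have hfiber : ∀ S ∈ powersetCard u univ,
      (crossingCircuitsOn S L).ncard ≤ ∑ i ∈ range (2 * u - k), Fintype.card F ^ i := by
    intro S hS
    obtain ⟨-, rfl⟩ := mem_powersetCard.1 hS
    rw [← Nat.card_eq_fintype_card,
      ← card_of_finrank F _ (finrank_ker_pairCombination hgen (by omega : k ≤ 2 * S.card))]
    exact ncard_crossingCircuitsOn_le hL (card_pos.1 (by omega))
  obtain ⟨d, hd⟩ : ∃ d, 2 * u - k = d + 1 := ⟨2 * u - k - 1, by omega⟩
  calc _ ≤ (⋃ S ∈ powersetCard u univ, crossingCircuitsOn S L).ncard :=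
        Set.ncard_le_ncard hcover
    _ ≤ ∑ S ∈ powersetCard u univ, (crossingCircuitsOn S L).ncard := set_ncard_biUnion_le _ _
    _ ≤ m.choose u * ∑ i ∈ range (2 * u - k), Fintype.card F ^ i := by
      simpa using sum_le_sum hfiber
    _ ≤ _ := by
      rw [hd, Nat.add_sub_cancel]
      exact Nat.mul_le_mul_left _ (geom_sum_range_succ_le_add_one_pow _ d)

/-- assuming `m ≤ k`, for every `u` with `(k+1)/2 ≤ u ≤ m`, the number of
crossing circuits of size `u` is at most `binom(m,u) · (q+1)^(2u-k-1)`. -/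
theorem statement12 [Fintype F] {m k : ℕ} (hm : 2 ≤ m) (hk4 : 4 ≤ k) (hkm : k + 1 ≤ 2 * m)
    (hmk : m ≤ k)
    (P Q : Fin m → (Fin k → F))
    (hgen : ∀ T : Finset (Fin m ⊕ Fin m), T.card ≤ k →
      LinearIndependent F (fun t : {x // x ∈ T} => Sum.elim P Q (t : Fin m ⊕ Fin m)))
    (L : Fin m → Submodule F (Fin k → F))
    (hL : ∀ i, L i = Submodule.span F {P i, Q i})
    (u : ℕ) (hu1 : k + 1 ≤ 2 * u) (hu2 : u ≤ m) :
    {D : Finset (Pt F k) | CrossingCircuit L D ∧ D.card = u}.ncard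
      ≤ m.choose u * (Fintype.card F + 1) ^ (2 * u - k - 1) :=
  statement12_general P Q hgen L hL u hu1 hu2
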